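/- arXiv:1503.00946 — 3 statements merged into one kernel-verified Lean document; each statement's English description precedes it below -/
import Mathlib

section
/- For the biweight kernel K(u) = (15/16)(1-u²)²·1_{[-1,1]}(u), for every x > 0 one has ⟨K, K(x·)⟩ / ‖K‖² = (1/16)[21m - 6x²m⁵ + x⁴m⁹], where m = min(1/x, 1). -/
/-! The product `K u * K (x * u)` vanishes outside `[-m, m]` with `m = min (1/x) 1`, and on that
interval it is the polynomial `(15/16)² (1 - u²)² (1 - x²u²)²`, so the inner product is an explicit
polynomial in `x` and `m`. The case `x = 1` gives `‖K‖² = (15/16)² · 256/315`; dividing, and using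
`x m = 1` when `x ≥ 1`, yields the formula. -/

open MeasureTheory Set

lemma Icc_inter_preimage_const_mul_Icc {x : ℝ} (hx : 0 < x) :
    Icc (-1) 1 ∩ (x * ·) ⁻¹' Icc (-1) 1 = Icc (-min (1 / x) 1) (min (1 / x) 1) := by
  rw [preimage_const_mul_Icc₀ _ _ hx, Icc_inter_Icc, neg_div, ← max_neg_neg, max_comm, min_comm]

lemma integral_indicator_mul_indicator_const_mul {f g : ℝ → ℝ} {x : ℝ} (hx : 0 < x) :
    ∫ u, (Icc (-1) 1).indicator f u * (Icc (-1) 1).indicator g (x * u)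
      = ∫ u in -min (1 / x) 1..min (1 / x) 1, f u * g (x * u) := by
  have hm : 0 ≤ min (1 / x) 1 := le_min (by positivity) zero_le_one
  simp_rw [← indicator_comp_right (x * ·) (g := g), ← inter_indicator_mul,
    Icc_inter_preimage_const_mul_Icc hx]
  rw [integral_indicator measurableSet_Icc, integral_Icc_eq_integral_Ioc,
    intervalIntegral.integral_of_le (by linarith)]
  rfl

lemma integral_biweight_mul_biweight_const_mul (x m : ℝ) :
    ∫ u in -m..m, 15 / 16 * (1 - u ^ 2) ^ 2 * (15 / 16 * (1 - (x * u) ^ 2) ^ 2)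
      = (15 / 16) ^ 2 * (2 * m - 4 * (1 + x ^ 2) / 3 * m ^ 3 + 2 * (1 + 4 * x ^ 2 + x ^ 4) / 5 * m ^ 5
          - 4 * (x ^ 2 + x ^ 4) / 7 * m ^ 7 + 2 * x ^ 4 / 9 * m ^ 9) := by
  have antideriv : ∀ u : ℝ, HasDerivAt
      (fun u : ℝ => (15 / 16) ^ 2 * (u - 2 * (1 + x ^ 2) / 3 * u ^ 3
        + (1 + 4 * x ^ 2 + x ^ 4) / 5 * u ^ 5 - 2 * (x ^ 2 + x ^ 4) / 7 * u ^ 7 + x ^ 4 / 9 * u ^ 9))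
      (15 / 16 * (1 - u ^ 2) ^ 2 * (15 / 16 * (1 - (x * u) ^ 2) ^ 2)) u := by
    intro u
    have h := (((((hasDerivAt_id' u).sub ((hasDerivAt_pow 3 u).const_mul (2 * (1 + x ^ 2) / 3))).add
      ((hasDerivAt_pow 5 u).const_mul ((1 + 4 * x ^ 2 + x ^ 4) / 5))).sub
      ((hasDerivAt_pow 7 u).const_mul (2 * (x ^ 2 + x ^ 4) / 7))).add
      ((hasDerivAt_pow 9 u).const_mul (x ^ 4 / 9))).const_mul ((15 / 16 : ℝ) ^ 2)
    exact h.congr_deriv (by norm_num; ring)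
  rw [intervalIntegral.integral_eq_sub_of_hasDerivAt (fun u _ => antideriv u)
    (Continuous.intervalIntegrable (by fun_prop) _ _)]
  ring

theorem biweight_kernel_inner_product
    (K : ℝ → ℝ)
    (hK : ∀ u, K u = Set.indicator (Set.Icc (-1 : ℝ) 1) (fun v => 15 / 16 * (1 - v ^ 2) ^ 2) u) :
    ∀ x : ℝ, 0 < x →
      (∫ u, K u * K (x * u)) / (∫ u, (K u) ^ 2)
        = 1 / 16 * (21 * min (1 / x) 1 - 6 * x ^ 2 * (min (1 / x) 1) ^ 5
            + x ^ 4 * (min (1 / x) 1) ^ 9) := by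
  intro x hx
  have overlap : ∀ y : ℝ, 0 < y → ∫ u, K u * K (y * u) = (15 / 16) ^ 2 * (2 * min (1 / y) 1
      - 4 * (1 + y ^ 2) / 3 * min (1 / y) 1 ^ 3 + 2 * (1 + 4 * y ^ 2 + y ^ 4) / 5 * min (1 / y) 1 ^ 5
      - 4 * (y ^ 2 + y ^ 4) / 7 * min (1 / y) 1 ^ 7 + 2 * y ^ 4 / 9 * min (1 / y) 1 ^ 9) := by
    intro y hy
    simp only [hK]
    rw [integral_indicator_mul_indicator_const_mul hy, integral_biweight_mul_biweight_const_mul]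
  have norm_sq : ∫ u, K u ^ 2 = (15 / 16) ^ 2 * (256 / 315) := by
    simp_rw [sq (K _)]
    simpa using (overlap 1 one_pos).trans (by norm_num)
  rw [norm_sq, overlap x hx]
  rcases min_cases (1 / x) 1 with ⟨hm, -⟩ | ⟨hm, -⟩ <;> rw [hm]
  · field_simp
    ring
  · ring
end

section
/- For the Gaussian kernel, the function φ(x) = 1 + 1/x − 2√(2/(1+x²)) satisfies: for every μ ∈ (0,1), the function x ↦ φ(x) + μ/x is strictly increasing on [2, ∞). -/
/-!
Write `φ x + μ / x = 1 + (2 / x - 2 √2 / √(1 + x²)) + (μ - 1) / x`. The last term is monotone since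
`μ ≤ 1`, so it suffices to treat `μ = 1`. For `2 ≤ x < y`, with `a = √(1 + x²)`, `b = √(1 + y²)`,
the increment of `2 / x - 2 √2 / a` is `2 (y - x) (√2 xy(x + y) - ab(a + b)) / (xy · ab(a + b))`,
and `a ≤ (√5 / 2) x` on `[2, ∞)` gives `ab(a + b) ≤ (√5 / 2)³ xy(x + y)`, where `(√5 / 2)³ < √2`
because `125 / 64 < 2`.
-/

open Real Set

lemma sqrt_one_add_sq_le {x : ℝ} (hx : 2 ≤ x) : √(1 + x ^ 2) ≤ √5 / 2 * x := by
  rw [sqrt_le_iff, mul_pow, div_pow, sq_sqrt (by norm_num : (0 : ℝ) ≤ 5)]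
  exact ⟨by positivity, by nlinarith⟩

lemma sqrt_five_div_two_pow_three_lt_sqrt_two : (√5 / 2) ^ 3 < √2 := by
  rw [lt_sqrt (by positivity), show ((√5 / 2) ^ 3) ^ 2 = (√5 ^ 2) ^ 3 / 64 by ring,
    sq_sqrt (by norm_num : (0 : ℝ) ≤ 5)]
  norm_num

lemma sqrt_one_add_sq_mul_lt {x y : ℝ} (hx : 2 ≤ x) (hy : 2 ≤ y) :
    √(1 + x ^ 2) * √(1 + y ^ 2) * (√(1 + x ^ 2) + √(1 + y ^ 2)) < √2 * (x * y * (x + y)) :=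
  calc √(1 + x ^ 2) * √(1 + y ^ 2) * (√(1 + x ^ 2) + √(1 + y ^ 2))
      ≤ √5 / 2 * x * (√5 / 2 * y) * (√5 / 2 * x + √5 / 2 * y) := by
        gcongr <;> exact sqrt_one_add_sq_le ‹_›
    _ = (√5 / 2) ^ 3 * (x * y * (x + y)) := by ring
    _ < √2 * (x * y * (x + y)) := by
        gcongr
        exact sqrt_five_div_two_pow_three_lt_sqrt_two

lemma strictMonoOn_two_div_sub_two_mul_sqrt :
    StrictMonoOn (fun x : ℝ => 2 / x - 2 * √(2 / (1 + x ^ 2))) (Ici 2) := by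
  intro x (hx : 2 ≤ x) y (hy : 2 ≤ y) hxy
  have key := sqrt_one_add_sq_mul_lt hx hy
  simp only [sqrt_div' 2 (by positivity : (0 : ℝ) ≤ 1 + x ^ 2),
    sqrt_div' 2 (by positivity : (0 : ℝ) ≤ 1 + y ^ 2)]
  set a := √(1 + x ^ 2)
  set b := √(1 + y ^ 2)
  have ha : 0 < a := by positivity
  have hb : 0 < b := by positivity
  have hba : (b - a) * (a + b) = (y - x) * (x + y) := by
    linear_combination sq_sqrt (by positivity : (0 : ℝ) ≤ 1 + y ^ 2) -
      sq_sqrt (by positivity : (0 : ℝ) ≤ 1 + x ^ 2)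
  rw [← sub_pos]
  have hincr : 2 / y - 2 * (√2 / b) - (2 / x - 2 * (√2 / a)) =
      2 * (y - x) * (√2 * (x * y * (x + y)) - a * b * (a + b)) / (x * y * (a * b * (a + b))) := by
    field_simp
    linear_combination (√2 * x * y) * hba
  rw [hincr]
  have hgap := sub_pos.2 key
  positivity

lemma monotoneOn_div_of_nonpos {c : ℝ} (hc : c ≤ 0) : MonotoneOn (fun x : ℝ => c / x) (Ioi 0) := by
  intro x (hx : 0 < x) y _ hxy
  simpa only [neg_div, neg_neg, neg_le_neg_iff] using
    div_le_div_of_nonneg_left (neg_nonneg.2 hc) hx hxy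

theorem gaussian_phi_plus_mu_div_strictMono
    (φ : ℝ → ℝ) (hφ : ∀ x, φ x = 1 + 1 / x - 2 * Real.sqrt (2 / (1 + x ^ 2))) :
    ∀ μ : ℝ, μ ∈ Set.Ioo (0 : ℝ) 1 →
      StrictMonoOn (fun x => φ x + μ / x) (Set.Ici (2 : ℝ)) := by
  intro μ hμ
  have hsplit : (fun x => φ x + μ / x) =
      fun x => 1 + (2 / x - 2 * √(2 / (1 + x ^ 2))) + (μ - 1) / x := by
    funext x
    rw [hφ]
    ring
  rw [hsplit]
  refine (strictMonoOn_two_div_sub_two_mul_sqrt.const_add 1).add_monotone ?_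
  exact (monotoneOn_div_of_nonpos (sub_nonpos.2 hμ.2.le)).mono fun x (hx : 2 ≤ x) =>
    show 0 < x by linarith
end

section
/- Let (f_h)_{h∈H} be functions in a normed space indexed by a finite set H of positive reals, and let B(h) = sup_{h'≤h, h'∈H} [‖f_{h'} − f_h‖² − V(h')]₊ for some function V : H → [0,∞). If ĥ minimizes h ↦ B(h) + V(h) over H, then for every h ∈ H, ‖f_{ĥ} − f_h‖² ≤ B(h∨ĥ) + V(h∧ĥ) ≤ B(h) + V(h) + max(B(h), V(h)). -/
open MeasureTheory

theorem GL_selection_deterministic_bound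
    {E : Type*} [NormedAddCommGroup E]
    (H : Finset ℝ) (hHpos : ∀ h ∈ H, 0 < h)
    (f : ℝ → E) (V : ℝ → ℝ) (hV : ∀ h ∈ H, 0 ≤ V h)
    (B : ℝ → ℝ)
    (hB : ∀ h ∈ H, B h =
      sSup {y : ℝ | ∃ h' ∈ H, h' ≤ h ∧ y = max (‖f h' - f h‖ ^ 2 - V h') 0})
    (hhat : ℝ) (hhhat : hhat ∈ H)
    (hmin : ∀ h ∈ H, B hhat + V hhat ≤ B h + V h) :
    ∀ h ∈ H,
      ‖f hhat - f h‖ ^ 2 ≤ B (max h hhat) + V (min h hhat) ∧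
      B (max h hhat) + V (min h hhat) ≤ B h + V h + max (B h) (V h) ∧
      ‖f hhat - f h‖ ^ 2 ≤ 2 * B h + 2 * V h + max (B h) (V h) ∧
      2 * B h + 2 * V h + max (B h) (V h)
          ≤ 2 * (B h + V h) + max (B h) (V h) := by
  have key : ∀ h ∈ H, ∀ h' ∈ H, h' ≤ h →
      max (‖f h' - f h‖ ^ 2 - V h') 0 ≤ B h := by
    intro h hh h' hh' hle
    rw [hB h hh]
    have hsub : {y : ℝ | ∃ h'' ∈ H, h'' ≤ h ∧
        y = max (‖f h'' - f h‖ ^ 2 - V h'') 0} ⊆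
        (fun h'' => max (‖f h'' - f h‖ ^ 2 - V h'') 0) '' ↑H := by
      rintro y ⟨h'', hm, _, rfl⟩; exact ⟨h'', hm, rfl⟩
    have hbdd : BddAbove {y : ℝ | ∃ h'' ∈ H, h'' ≤ h ∧
        y = max (‖f h'' - f h‖ ^ 2 - V h'') 0} :=
      ((H.finite_toSet.image _).subset hsub).bddAbove
    exact le_csSup hbdd ⟨h', hh', hle, rfl⟩
  have hB0 : ∀ h ∈ H, 0 ≤ B h := fun h hh =>
    le_trans (le_max_right _ 0) (key h hh h hh le_rfl)
  have bound : ∀ h ∈ H, ∀ h' ∈ H, h' ≤ h →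
      ‖f h' - f h‖ ^ 2 ≤ B h + V h' := by
    intro h hh h' hh' hle
    have := key h hh h' hh' hle
    have h1 : ‖f h' - f h‖ ^ 2 - V h' ≤ B h :=
      le_trans (le_max_left _ 0) this
    linarith
  intro h hh
  rcases le_total h hhat with hle | hle
  · have hmax : max h hhat = hhat := max_eq_right hle
    have hmin' : min h hhat = h := min_eq_left hle
    rw [hmax, hmin']
    have h1 : ‖f h - f hhat‖ ^ 2 ≤ B hhat + V h := bound hhat hhhat h hh hle
    have hnorm : ‖f hhat - f h‖ = ‖f h - f hhat‖ := norm_sub_rev _ _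
    rw [hnorm]
    have h2 : B hhat ≤ B h + V h := by
      have := hmin h hh; have := hV hhat hhhat; linarith
    have h3 : V h ≤ max (B h) (V h) := le_max_right _ _
    have h4 : 0 ≤ B h := hB0 h hh
    have h5 : 0 ≤ V h := hV h hh
    refine ⟨h1, by linarith, by linarith, by linarith⟩
  · have hmax : max h hhat = h := max_eq_left hle
    have hmin' : min h hhat = hhat := min_eq_right hle
    rw [hmax, hmin']
    have h1 : ‖f hhat - f h‖ ^ 2 ≤ B h + V hhat := bound h hh hhat hhhat hle
    have h2 : V hhat ≤ B h + V h := by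
      have := hmin h hh; have := hB0 hhat hhhat; linarith
    have h3 : B h ≤ max (B h) (V h) := le_max_left _ _
    have h4 : 0 ≤ B h := hB0 h hh
    have h5 : 0 ≤ V h := hV h hh
    refine ⟨h1, by linarith, by linarith, by linarith⟩
end
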